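/- Let ω = ω_Re + i ω_Im with ω_Re, ω_Im ∈ 𝕊^{n-1} unit vectors and ω_Re · ω_Im = 0. For g ∈ L^∞(ℝⁿ) with compact support contained in the ball B(0,r), define φ(x) = (1/(2π)) ∫_{ℝ²} (1/(y₁ + i y₂)) g(x − y₁ ω_Re − y₂ ω_Im) dy₁ dy₂. Then ‖φ‖_{L^∞(ℝⁿ)} ≤ C ‖g‖_{L^∞(ℝⁿ)} for a constant C depending only on r. -/

import Mathlib

/-!
On `ℝ × ℝ` with its sup norm, `‖y‖ ≤ |y₁ + i y₂|`, so the Cauchy kernel is bounded by `‖y‖⁻¹` and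
is therefore locally integrable in the plane. If `x - y₁ ωRe - y₂ ωIm` lies in `B(0, r)`, projecting
onto the orthonormal pair `ωRe, ωIm` puts `y` in the `r`-ball around `(⟪x, ωRe⟫, ⟪x, ωIm⟫)`, so
`|φ(x)| ≤ ‖g‖_∞/(2π) · ∫_{B(c,r)} |kernel|`. Off the unit ball the kernel is at most `1`, so this
integral is bounded by the integral over the unit ball plus the area of `B(0, r)`, uniformly in
`x` and `ω`.
-/

open Complex MeasureTheory

noncomputable section

/-- The inverse `N_ω^{-1}` of the complexified directional derivative `N_ω = ω·∇`,
given by convolution with the planar Cauchy kernel in the plane spanned by `ωRe, ωIm`. -/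
def NInv {n : ℕ} (ωRe ωIm : EuclideanSpace ℝ (Fin n))
    (g : EuclideanSpace ℝ (Fin n) → ℂ) (x : EuclideanSpace ℝ (Fin n)) : ℂ :=
  (1 / (2 * Real.pi)) *
    ∫ y : ℝ × ℝ, (1 / ((y.1 : ℂ) + I * (y.2 : ℂ))) * g (x - y.1 • ωRe - y.2 • ωIm)

open Metric

lemma setIntegral_le_setIntegral_add_measureReal {α : Type*} [MeasurableSpace α] {μ : Measure α}
    {k : α → ℝ} {s t : Set α} (hs : MeasurableSet s) (ht : MeasurableSet t) (hμs : μ s ≠ ⊤)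
    (hks : IntegrableOn k s μ) (hkt : IntegrableOn k t μ) (hk0 : 0 ≤ k)
    (hk1 : ∀ y ∉ t, k y ≤ 1) :
    ∫ y in s, k y ∂μ ≤ ∫ y in t, k y ∂μ + μ.real s := by
  have hμst : μ (s \ t) ≠ ⊤ := measure_ne_top_of_subset Set.sdiff_subset hμs
  calc ∫ y in s, k y ∂μ = ∫ y in s ∩ t, k y ∂μ + ∫ y in s \ t, k y ∂μ :=
        (integral_inter_add_sdiff ht hks).symm
    _ ≤ ∫ y in t, k y ∂μ + ∫ _ in s \ t, (1 : ℝ) ∂μ :=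
        add_le_add (setIntegral_mono_set hkt (.of_forall hk0) Set.inter_subset_right.eventuallyLE)
          (setIntegral_mono_on (hks.mono_set Set.sdiff_subset) (integrableOn_const hμst)
            (hs.diff ht) fun y hy => hk1 y hy.2)
    _ ≤ ∫ y in t, k y ∂μ + μ.real s := by
        rw [setIntegral_const, smul_eq_mul, mul_one]
        gcongr
        exact Set.sdiff_subset

def cauchyKernel (y : ℝ × ℝ) : ℂ := 1 / ((y.1 : ℂ) + I * (y.2 : ℂ))

lemma norm_le_norm_ofReal_add_I_mul (y : ℝ × ℝ) : ‖y‖ ≤ ‖(y.1 : ℂ) + I * (y.2 : ℂ)‖ := by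
  refine max_le ?_ ?_
  · simpa using abs_re_le_norm ((y.1 : ℂ) + I * (y.2 : ℂ))
  · simpa using abs_im_le_norm ((y.1 : ℂ) + I * (y.2 : ℂ))

lemma norm_cauchyKernel_le (y : ℝ × ℝ) : ‖cauchyKernel y‖ ≤ ‖y‖⁻¹ := by
  rcases eq_or_ne y 0 with rfl | hy
  · simp [cauchyKernel]
  · rw [cauchyKernel, norm_div, norm_one, one_div]
    exact inv_anti₀ (norm_pos_iff.2 hy) (norm_le_norm_ofReal_add_I_mul y)

lemma locallyIntegrable_cauchyKernel : LocallyIntegrable cauchyKernel := by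
  have hdim : Module.finrank ℝ (ℝ × ℝ) = 2 := by simp
  refine locallyIntegrable_of_norm_le_rpow (C := 1) (α := 1) (by omega) (by simp [hdim])
    (.of_forall fun y => ?_)
    (by unfold cauchyKernel; fun_prop : Measurable cauchyKernel).aestronglyMeasurable
  simpa [Real.rpow_neg_one] using norm_cauchyKernel_le y

lemma setIntegral_closedBall_norm_cauchyKernel_le (c : ℝ × ℝ) (r : ℝ) :
    ∫ y in closedBall c r, ‖cauchyKernel y‖ ≤
      (∫ y in closedBall 0 1, ‖cauchyKernel y‖) + volume.real (closedBall (0 : ℝ × ℝ) r) := by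
  rw [← Measure.addHaar_real_closedBall_center volume c r]
  refine setIntegral_le_setIntegral_add_measureReal measurableSet_closedBall
    measurableSet_closedBall measure_closedBall_lt_top.ne
    (locallyIntegrable_cauchyKernel.integrableOn_isCompact (isCompact_closedBall c r)).norm
    (locallyIntegrable_cauchyKernel.integrableOn_isCompact (isCompact_closedBall 0 1)).norm
    (fun y => norm_nonneg _) fun y hy => ?_
  rw [mem_closedBall_zero_iff, not_le] at hy
  exact (norm_cauchyKernel_le y).trans (inv_le_one_of_one_le₀ hy.le)

lemma norm_inner_prod_sub_le {E : Type*} [NormedAddCommGroup E] [InnerProductSpace ℝ E]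
    {ωRe ωIm : E} (hRe : ‖ωRe‖ = 1) (hIm : ‖ωIm‖ = 1) (horth : inner ℝ ωRe ωIm = (0 : ℝ))
    (x : E) (y : ℝ × ℝ) :
    ‖((inner ℝ x ωRe : ℝ), (inner ℝ x ωIm : ℝ)) - y‖ ≤ ‖x - y.1 • ωRe - y.2 • ωIm‖ := by
  set z := x - y.1 • ωRe - y.2 • ωIm
  have hzRe : inner ℝ z ωRe = inner ℝ x ωRe - y.1 := by
    simp [z, inner_sub_left, real_inner_smul_left, hRe, real_inner_comm ωRe ωIm, horth]
  have hzIm : inner ℝ z ωIm = inner ℝ x ωIm - y.2 := by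
    simp [z, inner_sub_left, real_inner_smul_left, hIm, horth]
  refine max_le ?_ ?_
  · simpa [← hzRe, hRe] using abs_real_inner_le_norm z ωRe
  · simpa [← hzIm, hIm] using abs_real_inner_le_norm z ωIm

/-- `L^∞` bound on `φ = N_ω^{-1}(g)` for compactly supported bounded `g`,
with a constant depending only on the radius `r` of the support. -/
theorem stmt_2 {n : ℕ} (r : ℝ) (hr : 0 < r) :
    ∃ C > 0, ∀ (ωRe ωIm : EuclideanSpace ℝ (Fin n)), ‖ωRe‖ = 1 → ‖ωIm‖ = 1 →
      inner ℝ ωRe ωIm = (0 : ℝ) →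
      ∀ (g : EuclideanSpace ℝ (Fin n) → ℂ), Measurable g →
        Function.support g ⊆ Metric.closedBall 0 r →
        ∀ M : ℝ, (∀ x, ‖g x‖ ≤ M) →
          ∀ x, ‖NInv ωRe ωIm g x‖ ≤ C * M := by
  set K := (∫ y in closedBall 0 1, ‖cauchyKernel y‖) + volume.real (closedBall (0 : ℝ × ℝ) r)
  have hK : 0 < K := add_pos_of_nonneg_of_pos (setIntegral_nonneg measurableSet_closedBall
    fun _ _ => norm_nonneg _)
    (ENNReal.toReal_pos (measure_closedBall_pos _ _ hr).ne' measure_closedBall_lt_top.ne)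
  refine ⟨K / (2 * Real.pi), by positivity, ?_⟩
  intro ωRe ωIm hRe hIm horth g _ hg M hM x
  set c : ℝ × ℝ := (inner ℝ x ωRe, inner ℝ x ωIm)
  have hvanish : ∀ y ∉ closedBall c r, cauchyKernel y * g (x - y.1 • ωRe - y.2 • ωIm) = 0 := by
    intro y hy
    refine mul_eq_zero_of_right _ (Function.notMem_support.1 fun hsupp => hy ?_)
    rw [mem_closedBall, dist_comm, dist_eq_norm]
    exact (norm_inner_prod_sub_le hRe hIm horth x y).trans (mem_closedBall_zero_iff.1 (hg hsupp))
  calc ‖NInv ωRe ωIm g x‖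
      = ‖∫ y in closedBall c r, cauchyKernel y * g (x - y.1 • ωRe - y.2 • ωIm)‖
          / (2 * Real.pi) := by
        rw [NInv, setIntegral_eq_integral_of_forall_compl_eq_zero hvanish, norm_mul]
        simp [cauchyKernel, abs_of_pos Real.pi_pos, div_eq_inv_mul]
    _ ≤ (∫ y in closedBall c r, M * ‖cauchyKernel y‖) / (2 * Real.pi) := by
        gcongr
        refine norm_integral_le_of_norm_le ((locallyIntegrable_cauchyKernel.integrableOn_isCompact
          (isCompact_closedBall c r)).norm.const_mul M) (.of_forall fun y => ?_)
        rw [norm_mul, mul_comm]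
        exact mul_le_mul_of_nonneg_right (hM _) (norm_nonneg _)
    _ = M * (∫ y in closedBall c r, ‖cauchyKernel y‖) / (2 * Real.pi) := by
        rw [integral_const_mul]
    _ ≤ M * K / (2 * Real.pi) := by
        gcongr
        · exact (norm_nonneg _).trans (hM 0)
        · exact setIntegral_closedBall_norm_cauchyKernel_le c r
    _ = K / (2 * Real.pi) * M := by ring

end
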